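/- arXiv:2410.20931 — 5 statements merged into one kernel-verified Lean document; each statement's English description precedes it below -/
import Mathlib

section
/- The transport matrix M_tr defined by (M_tr)_{kk} = |e_k|/Δt + c_k, (M_tr)_{ki} = -c_k w_i for edges e_i incoming to edge e_k's inflow node (where w_i = c_i / ∑_{e_l outgoing from that node} c_l), and 0 otherwise, has every column sum equal to |e_i|/Δt > 0, provided every internal node has at least one outgoing edge and all velocities c_k are positive. -/
/-! The off-diagonal entries of column `i` add up to `-w i` times the total velocity leaving the
node that edge `i` flows into, which is `-c i` by the choice of `w`; this cancels the `c i` on the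
diagonal. -/

open Finset

section TransportColumn

variable {ι V R : Type*} [Fintype ι] [DecidableEq ι] [DecidableEq V]

theorem sum_ite_eq_self_add_sum_erase [AddCommMonoid R] (i : ι) (g f : ι → R) :
    ∑ k, (if k = i then g k else f k) = g i + ∑ k ∈ univ.erase i, f k := by
  rw [← add_sum_erase _ _ (mem_univ i), if_pos rfl]
  congr 1
  exact sum_congr rfl fun k hk => if_neg (ne_of_mem_erase hk)

theorem sum_transport_column [Field R] (head tail : ι → V) (d c w : ι → R)
    (M : Matrix ι ι R)
    (hM : ∀ k i, M k i =
      if k = i then d k + c k else if tail k = head i then -(c k * w i) else 0)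
    {i : ι} (hi : tail i ≠ head i) :
    ∑ k, M k i = d i + c i - w i * ∑ k ∈ univ.filter (fun k => tail k = head i), c k := by
  simp_rw [hM, sum_ite_eq_self_add_sum_erase]
  rw [sum_erase univ (f := fun k => if tail k = head i then -(c k * w i) else 0) (if_neg hi),
    ← sum_filter, sum_neg_distrib, ← sum_mul]
  ring

end TransportColumn

open Matrix Finset in
/-- `head k` is the node edge `k` flows into and `tail k` the node it leaves from,
so edge `i` feeds edge `k` exactly when `tail k = head i`. -/
theorem transport_matrix_column_sums_general
    {ne : ℕ} {V : Type*} [DecidableEq V]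
    (head tail : Fin ne → V)
    (len c : Fin ne → ℝ) (Δt : ℝ)
    (hlen : ∀ k, 0 < len k) (hc : ∀ k, 0 < c k) (hΔt : 0 < Δt)
    (hnoloop : ∀ k, tail k ≠ head k)
    (hout : ∀ i, ∃ l, tail l = head i)
    (w : Fin ne → ℝ)
    (hw : ∀ i, w i = c i / ∑ l ∈ Finset.univ.filter (fun l => tail l = head i), c l)
    (M : Matrix (Fin ne) (Fin ne) ℝ)
    (hM : ∀ k i, M k i =
      if k = i then len k / Δt + c k
      else if tail k = head i then -(c k * w i) else 0) :
    ∀ i, (∑ k, M k i) = len i / Δt ∧ 0 < len i / Δt := by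
  intro i
  have hout_pos : 0 < ∑ l ∈ univ.filter (fun l => tail l = head i), c l := by
    obtain ⟨l, hl⟩ := hout i
    exact sum_pos' (fun k _ => (hc k).le) ⟨l, mem_filter.mpr ⟨mem_univ l, hl⟩, hc l⟩
  refine ⟨?_, div_pos (hlen i) hΔt⟩
  rw [sum_transport_column head tail (fun k => len k / Δt) c w M hM (hnoloop i), hw i,
    div_mul_cancel₀ _ hout_pos.ne', add_sub_cancel_right]

open Matrix Finset in
/-- Transport matrix on a directed graph: edges `Fin ne`, nodes `V`.
`head k` is the inflow endpoint of edge `k` (where mass enters the edge),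
`tail k` is the node from which edge `k` is outgoing.
Edge `i` is incoming to edge `k`'s inflow node when `tail k = head i`. -/
theorem transport_matrix_column_sums
    {ne : ℕ} {V : Type*} [Fintype V] [DecidableEq V]
    (head tail : Fin ne → V)
    (len c : Fin ne → ℝ) (Δt : ℝ)
    (hlen : ∀ k, 0 < len k) (hc : ∀ k, 0 < c k) (hΔt : 0 < Δt)
    (hnoloop : ∀ k, tail k ≠ head k)
    (hout : ∀ i, ∃ l, tail l = head i)
    (w : Fin ne → ℝ)
    (hw : ∀ i, w i = c i / ∑ l ∈ Finset.univ.filter (fun l => tail l = head i), c l)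
    (M : Matrix (Fin ne) (Fin ne) ℝ)
    (hM : ∀ k i, M k i =
      if k = i then len k / Δt + c k
      else if tail k = head i then -(c k * w i) else 0) :
    ∀ i, (∑ k, M k i) = len i / Δt ∧ 0 < len i / Δt :=
  transport_matrix_column_sums_general head tail len c Δt hlen hc hΔt hnoloop hout w hw M hM
end

section
/- A symmetric Z-matrix that is positive definite is inverse-positive: its inverse exists and has all nonnegative entries. -/
/-! A positive definite Z-matrix is monotone: if `A x ≥ 0`, split `x = x⁺ - x⁻`. Since `x⁺` and
`x⁻` have disjoint supports, `x⁻ ⬝ A x⁺` only involves off-diagonal entries and is `≤ 0`, while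
`x⁻ ⬝ A x ≥ 0`; hence `x⁻ ⬝ A x⁻ ≤ 0`, and positive definiteness forces `x⁻ = 0`. Applied to
`A (A⁻¹ eⱼ) = eⱼ ≥ 0`, monotonicity makes every column of `A⁻¹` nonnegative. -/

namespace Matrix

variable {n R : Type*} [Fintype n]

theorem dotProduct_mulVec_nonpos_of_offDiag_nonpos [CommRing R] [PartialOrder R]
    [IsOrderedRing R] {A : Matrix n n R} (hA : ∀ i j, i ≠ j → A i j ≤ 0) {u v : n → R}
    (hu : 0 ≤ u) (hv : 0 ≤ v) (huv : ∀ k, u k * v k = 0) : u ⬝ᵥ A *ᵥ v ≤ 0 := by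
  simp only [dotProduct, mulVec, Finset.mul_sum]
  refine Finset.sum_nonpos fun a _ => Finset.sum_nonpos fun b _ => ?_
  rcases eq_or_ne a b with rfl | hab
  · rw [mul_left_comm, huv a, mul_zero]
  · exact mul_nonpos_of_nonneg_of_nonpos (hu a)
      (mul_nonpos_of_nonpos_of_nonneg (hA a b hab) (hv b))

theorem PosDef.nonneg_of_mulVec_nonneg [CommRing R] [LinearOrder R] [IsStrictOrderedRing R]
    [StarRing R] [TrivialStar R] {A : Matrix n n R} (hZ : ∀ i j, i ≠ j → A i j ≤ 0)
    (hA : A.PosDef) {x : n → R} (hx : 0 ≤ A *ᵥ x) : 0 ≤ x := by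
  have hdisjoint : ∀ k, x⁻ k * x⁺ k = 0 := fun k => by
    rcases le_total (x k) 0 with h | h
    · rw [show x⁺ k = 0 from posPart_eq_zero.2 h, mul_zero]
    · rw [show x⁻ k = 0 from negPart_eq_zero.2 h, zero_mul]
  have hcross : x⁻ ⬝ᵥ A *ᵥ x⁺ ≤ 0 :=
    dotProduct_mulVec_nonpos_of_offDiag_nonpos hZ (negPart_nonneg x) (posPart_nonneg x) hdisjoint
  have hquad : x⁻ ⬝ᵥ A *ᵥ x⁻ ≤ 0 := by
    have hpair : 0 ≤ x⁻ ⬝ᵥ A *ᵥ x := dotProduct_nonneg_of_nonneg (negPart_nonneg x) hx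
    have hsplit : A *ᵥ x = A *ᵥ x⁺ - A *ᵥ x⁻ := by rw [← mulVec_sub, posPart_sub_negPart]
    rw [hsplit, dotProduct_sub] at hpair
    linarith
  have hneg : x⁻ = 0 := by
    by_contra hne
    have := hA.dotProduct_mulVec_pos hne
    rw [star_trivial] at this
    linarith
  exact negPart_eq_zero.1 hneg

theorem inv_apply_nonneg_of_mulVec_nonneg [DecidableEq n] [CommRing R] [PartialOrder R]
    [IsOrderedRing R] {A : Matrix n n R} (hA : IsUnit A.det)
    (hmono : ∀ x, 0 ≤ A *ᵥ x → 0 ≤ x) (i j : n) : 0 ≤ A⁻¹ i j := by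
  have hcol : A *ᵥ (A⁻¹ *ᵥ Pi.single j 1) = Pi.single j 1 := by
    rw [mulVec_mulVec, mul_nonsing_inv A hA, one_mulVec]
  have := hmono _ (hcol ▸ Pi.single_nonneg.2 zero_le_one)
  simpa [mulVec_single_one] using this i

end Matrix

open Matrix in
theorem stieltjes_matrix_inverse_positive
    {N : ℕ} (A : Matrix (Fin N) (Fin N) ℝ)
    (hZ : ∀ i j, i ≠ j → A i j ≤ 0)
    (hpd : A.PosDef) :
    IsUnit A.det ∧ ∀ i j, 0 ≤ A⁻¹ i j := by
  have hdet : IsUnit A.det := (isUnit_iff_isUnit_det A).1 hpd.isUnit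
  exact ⟨hdet, inv_apply_nonneg_of_mulVec_nonneg hdet fun _ => hpd.nonneg_of_mulVec_nonneg hZ⟩
end

section
/- Haynsworth inertia additivity: if A is a Hermitian matrix and A_{11} is a nonsingular principal submatrix, then In(A) = In(A_{11}) + In(A/A_{11}), where A/A_{11} is the Schur complement. -/
/-!
With `P = [[1, A₁₁⁻¹A₁₂], [0, 1]]` one has `A = Pᵀ diag(A₁₁, A/A₁₁) P`, so the quadratic forms of
`A` and of the block diagonal matrix are equivalent and, by Sylvester's law of inertia, have the
same numbers of positive and negative eigenvalues. For the block diagonal matrix these numbers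
add up, because its characteristic polynomial is the product of those of the blocks. The
multiplicities of `0` follow by counting dimensions.
-/

open Matrix Finset QuadraticMap

namespace Matrix

variable {ι κ R : Type*} [Fintype ι] [DecidableEq ι] [Fintype κ] [DecidableEq κ]

theorem toQuadraticForm'_transpose_mul_mul [CommRing R] (M P : Matrix ι ι R) :
    (Pᵀ * M * P).toQuadraticForm' = M.toQuadraticForm'.comp (toLin' P) := by
  ext x
  simp [toQuadraticForm', toLinearMap₂'_apply', dotProduct_mulVec, ← mulVec_mulVec,
    vecMul_transpose]

theorem equivalent_toQuadraticForm'_transpose_mul_mul [CommRing R] (M : Matrix ι ι R)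
    {P : Matrix ι ι R} (hP : IsUnit P.det) :
    M.toQuadraticForm'.Equivalent (Pᵀ * M * P).toQuadraticForm' := by
  have := P.invertibleOfIsUnitDet hP
  rw [toQuadraticForm'_transpose_mul_mul]
  exact ⟨isometryEquivOfCompLinearEquiv _ (P.toLinearEquiv' inferInstance)⟩

theorem toQuadraticForm'_diagonal [CommRing R] (w : ι → R) :
    (diagonal w).toQuadraticForm' = weightedSumSquares R w := by
  ext x
  simp [toQuadraticForm', toLinearMap₂'_apply', weightedSumSquares_apply, dotProduct,
    mulVec_diagonal, mul_left_comm]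

theorem IsHermitian.equivalent_toQuadraticForm'_weightedSumSquares {A : Matrix ι ι ℝ}
    (hA : A.IsHermitian) : A.toQuadraticForm'.Equivalent (weightedSumSquares ℝ hA.eigenvalues) := by
  set U : Matrix ι ι ℝ := (hA.eigenvectorUnitary : Matrix ι ι ℝ)
  have hA' : A = (star U)ᵀ * diagonal hA.eigenvalues * star U := by
    conv_lhs => rw [hA.spectral_theorem]
    simp [U, Unitary.conjStarAlgAut_apply, star_eq_conjTranspose]
  rw [← toQuadraticForm'_diagonal, congrArg toQuadraticForm' hA']
  exact (equivalent_toQuadraticForm'_transpose_mul_mul _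
    (by simpa [U] using UnitaryGroup.det_isUnit (star hA.eigenvectorUnitary))).symm

namespace IsHermitian

variable {A : Matrix ι ι ℝ} (hA : A.IsHermitian)
include hA

theorem sigPos_toQuadraticForm' :
    sigPos A.toQuadraticForm' = #{i | 0 < hA.eigenvalues i} := by
  rw [QuadraticForm.sigPos_of_equiv_weightedSumSquares
    hA.equivalent_toQuadraticForm'_weightedSumSquares, ← Set.ncard_coe_finset]
  simp

theorem sigNeg_toQuadraticForm' :
    sigNeg A.toQuadraticForm' = #{i | hA.eigenvalues i < 0} := by
  rw [QuadraticForm.sigNeg_of_equiv_weightedSumSquares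
    hA.equivalent_toQuadraticForm'_weightedSumSquares, ← Set.ncard_coe_finset]
  simp

theorem card_filter_eigenvalues (p : ℝ → Prop) [DecidablePred p] :
    #{i | p (hA.eigenvalues i)} = Multiset.card (A.charpoly.roots.filter p) := by
  simp [hA.roots_charpoly_eq_eigenvalues, Multiset.filter_map, Finset.card_def, Finset.filter_val]

end IsHermitian

theorem IsHermitian.card_filter_eigenvalues_fromBlocks_zero {B : Matrix ι ι ℝ} {C : Matrix κ κ ℝ}
    (hB : B.IsHermitian) (hC : C.IsHermitian) (hBC : (Matrix.fromBlocks B 0 0 C).IsHermitian)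
    (p : ℝ → Prop) [DecidablePred p] :
    #{i | p (hBC.eigenvalues i)} = #{i | p (hB.eigenvalues i)} + #{i | p (hC.eigenvalues i)} := by
  rw [hBC.card_filter_eigenvalues, hB.card_filter_eigenvalues, hC.card_filter_eigenvalues,
    charpoly_fromBlocks_zero₂₁,
    Polynomial.roots_mul (mul_ne_zero B.charpoly_monic.ne_zero C.charpoly_monic.ne_zero),
    Multiset.filter_add, Multiset.card_add]

theorem fromBlocks_eq_transpose_mul_fromBlocks_zero_mul [CommRing R]
    {A : Matrix ι ι R} (hA : A.IsSymm) (hdet : IsUnit A.det) (B : Matrix ι κ R) (D : Matrix κ κ R) :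
    fromBlocks A B Bᵀ D = (fromBlocks 1 (A⁻¹ * B) 0 1)ᵀ *
      fromBlocks A 0 0 (D - Bᵀ * A⁻¹ * B) * fromBlocks 1 (A⁻¹ * B) 0 1 := by
  have := A.invertibleOfIsUnitDet hdet
  rw [fromBlocks_eq_of_invertible₁₁ A B Bᵀ D, invOf_eq_nonsing_inv]
  simp [fromBlocks_transpose, transpose_nonsing_inv, hA.eq]

end Matrix

theorem Finset.card_filter_pos_add_card_filter_neg_add_card_filter_zero {ι α : Type*}
    [Fintype ι] [LinearOrder α] [Zero α] (f : ι → α) :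
    #{i | 0 < f i} + #{i | f i < 0} + #{i | f i = 0} = Fintype.card ι := by
  classical
  rw [card_filter, card_filter, card_filter, ← sum_add_distrib, ← sum_add_distrib, ← card_univ,
    card_eq_sum_ones]
  refine sum_congr rfl fun i _ => ?_
  rcases lt_trichotomy (f i) 0 with h | h | h
  · simp [h, h.ne, h.not_gt]
  · simp [h]
  · simp [h, h.ne', h.not_gt]

open Matrix Finset in
theorem haynsworth_inertia_additivity
    {n m : ℕ} (A11 : Matrix (Fin n) (Fin n) ℝ)
    (A12 : Matrix (Fin n) (Fin m) ℝ) (A22 : Matrix (Fin m) (Fin m) ℝ)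
    (hA : (Matrix.fromBlocks A11 A12 A12ᵀ A22).IsHermitian)
    (h11 : A11.IsHermitian)
    (h11inv : IsUnit A11.det)
    (hS : (A22 - A12ᵀ * A11⁻¹ * A12).IsHermitian) :
    ((Finset.univ.filter (fun i => 0 < hA.eigenvalues i)).card
        = (Finset.univ.filter (fun i => 0 < h11.eigenvalues i)).card
          + (Finset.univ.filter (fun i => 0 < hS.eigenvalues i)).card) ∧
    ((Finset.univ.filter (fun i => hA.eigenvalues i < 0)).card
        = (Finset.univ.filter (fun i => h11.eigenvalues i < 0)).card
          + (Finset.univ.filter (fun i => hS.eigenvalues i < 0)).card) ∧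
    ((Finset.univ.filter (fun i => hA.eigenvalues i = 0)).card
        = (Finset.univ.filter (fun i => h11.eigenvalues i = 0)).card
          + (Finset.univ.filter (fun i => hS.eigenvalues i = 0)).card) := by
  set S := A22 - A12ᵀ * A11⁻¹ * A12
  have hD : (fromBlocks A11 0 0 S).IsHermitian := h11.fromBlocks (by simp) hS
  have hcongr := (fromBlocks A11 0 0 S).equivalent_toQuadraticForm'_transpose_mul_mul
    (P := fromBlocks 1 (A11⁻¹ * A12) 0 1) (by simp)
  rw [← fromBlocks_eq_transpose_mul_fromBlocks_zero_mul (isHermitian_iff_isSymm.mp h11) h11inv]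
    at hcongr
  have hpos : #{i | 0 < hA.eigenvalues i} =
      #{i | 0 < h11.eigenvalues i} + #{i | 0 < hS.eigenvalues i} := by
    rw [← hA.sigPos_toQuadraticForm', ← hcongr.sigPos_eq, hD.sigPos_toQuadraticForm',
      h11.card_filter_eigenvalues_fromBlocks_zero hS hD (0 < ·)]
  have hneg : #{i | hA.eigenvalues i < 0} =
      #{i | h11.eigenvalues i < 0} + #{i | hS.eigenvalues i < 0} := by
    rw [← hA.sigNeg_toQuadraticForm', ← hcongr.sigNeg_eq, hD.sigNeg_toQuadraticForm',
      h11.card_filter_eigenvalues_fromBlocks_zero hS hD (· < 0)]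
  refine ⟨hpos, hneg, ?_⟩
  have hA_card := card_filter_pos_add_card_filter_neg_add_card_filter_zero hA.eigenvalues
  have h11_card := card_filter_pos_add_card_filter_neg_add_card_filter_zero h11.eigenvalues
  have hS_card := card_filter_pos_add_card_filter_neg_add_card_filter_zero hS.eigenvalues
  simp only [Fintype.card_sum, Fintype.card_fin] at hA_card h11_card hS_card
  omega
end

section
/- If M is a Z-matrix such that M = A₁ + A₂ where A₁ is a Z-matrix with nonnegative column sums and positive diagonal, and A₂ is a symmetric Z-matrix with nonnegative row sums (positive on at least one row) satisfying the SC property on the union of sparsity patterns, then Mᵀ is weakly diagonally dominant by rows with strict dominance in at least one row; if additionally M satisfies the SC property, M is invertible. -/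
/-!
Writing `A = Mᵀ`, the hypotheses make `A` a Z-matrix whose row sums are the column sums of `A₁`
plus the row sums of `A₂ = A₂ᵀ`, hence nonnegative and positive in one row. For a Z-matrix with
nonnegative row sums the diagonal entry exceeds the off-diagonal absolute row sum exactly by the
row sum, which gives the dominance claims.

Invertibility is Taussky's argument for weakly chained diagonally dominant matrices: if `A v = 0`
with `v ≠ 0`, equality in the dominance estimate at a row where `‖v‖` is maximal forces `‖v‖` to be
maximal along every edge `A i j ≠ 0` leaving it, and zero if the row is strictly dominant. The
chains of nonzero entries of `M` lead from the strict row to every index, so in the graph of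
`A = Mᵀ` the strict row is reachable from every index.
-/

open Finset Relation

theorem Fin.reflTransGen_of_chain {α : Type*} {r : α → α → Prop} {k : ℕ} {c : Fin (k + 1) → α}
    (hc : ∀ l : Fin k, r (c l.castSucc) (c l.succ)) : ReflTransGen r (c 0) (c (Fin.last k)) := by
  suffices ∀ m : Fin (k + 1), ReflTransGen r (c 0) (c m) from this _
  exact Fin.induction .refl fun l ih => ih.tail (hc l)

namespace Matrix

variable {n : Type*} [Fintype n] [DecidableEq n]

theorem sum_erase_abs_add_sum_eq_abs_diag {A : Matrix n n ℝ} (hZ : ∀ i j, i ≠ j → A i j ≤ 0)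
    {i : n} (hrow : 0 ≤ ∑ j, A i j) :
    ∑ j ∈ univ.erase i, |A i j| + ∑ j, A i j = |A i i| := by
  have hoff : ∑ j ∈ univ.erase i, |A i j| = -∑ j ∈ univ.erase i, A i j := by
    rw [← sum_neg_distrib]
    exact sum_congr rfl fun j hj => abs_of_nonpos (hZ i j (ne_of_mem_erase hj).symm)
  have hsplit := add_sum_erase univ (A i) (mem_univ i)
  have hdiag : 0 ≤ A i i := by
    have := sum_nonneg fun j (_ : j ∈ univ.erase i) => abs_nonneg (A i j)
    linarith
  rw [abs_of_nonneg hdiag]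
  linarith

variable {K : Type*} [NormedField K] {A : Matrix n n K} {v : n → K}

theorem norm_diag_mul_le_sum_erase (hv : A *ᵥ v = 0) (i : n) :
    ‖A i i‖ * ‖v i‖ ≤ ∑ j ∈ univ.erase i, ‖A i j‖ * ‖v j‖ := by
  have hrow : A i i * v i = -∑ j ∈ univ.erase i, A i j * v j := by
    rw [eq_neg_iff_add_eq_zero, add_sum_erase univ (fun j => A i j * v j) (mem_univ i)]
    exact congrFun hv i
  calc ‖A i i‖ * ‖v i‖ = ‖∑ j ∈ univ.erase i, A i j * v j‖ := by rw [← norm_mul, hrow, norm_neg]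
    _ ≤ ∑ j ∈ univ.erase i, ‖A i j * v j‖ := norm_sum_le _ _
    _ = ∑ j ∈ univ.erase i, ‖A i j‖ * ‖v j‖ := by simp_rw [norm_mul]

/-- When row `i` is dominant and `‖v i‖` is maximal, both summands are nonnegative, hence zero. -/
theorem sum_erase_mul_sub_add_dominance_gap_nonpos (hv : A *ᵥ v = 0) (i : n) :
    ∑ j ∈ univ.erase i, ‖A i j‖ * (‖v i‖ - ‖v j‖)
      + (‖A i i‖ - ∑ j ∈ univ.erase i, ‖A i j‖) * ‖v i‖ ≤ 0 := by
  have := norm_diag_mul_le_sum_erase hv i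
  simp only [mul_sub, sub_mul, sum_sub_distrib, sum_mul] at this ⊢
  linarith

theorem norm_eq_of_mulVec_eq_zero_of_ne_zero {i : n} (hv : A *ᵥ v = 0)
    (hmax : ∀ j, ‖v j‖ ≤ ‖v i‖) (hdom : ∑ j ∈ univ.erase i, ‖A i j‖ ≤ ‖A i i‖)
    {j : n} (hij : A i j ≠ 0) : ‖v j‖ = ‖v i‖ := by
  rcases eq_or_ne j i with rfl | hji
  · rfl
  have hterms : ∀ l ∈ univ.erase i, 0 ≤ ‖A i l‖ * (‖v i‖ - ‖v l‖) :=
    fun l _ => mul_nonneg (norm_nonneg _) (sub_nonneg.mpr (hmax l))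
  have hgap : 0 ≤ (‖A i i‖ - ∑ j ∈ univ.erase i, ‖A i j‖) * ‖v i‖ :=
    mul_nonneg (sub_nonneg.mpr hdom) (norm_nonneg _)
  have hsum : ∑ l ∈ univ.erase i, ‖A i l‖ * (‖v i‖ - ‖v l‖) = 0 :=
    le_antisymm (by linarith [sum_erase_mul_sub_add_dominance_gap_nonpos hv i]) (sum_nonneg hterms)
  have hj := (sum_eq_zero_iff_of_nonneg hterms).mp hsum j (mem_erase.mpr ⟨hji, mem_univ j⟩)
  rcases mul_eq_zero.mp hj with h | h
  · exact absurd (norm_eq_zero.mp h) hij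
  · linarith

theorem eq_zero_of_mulVec_eq_zero_of_sum_erase_lt {i : n} (hv : A *ᵥ v = 0)
    (hmax : ∀ j, ‖v j‖ ≤ ‖v i‖) (hstrict : ∑ j ∈ univ.erase i, ‖A i j‖ < ‖A i i‖) :
    v i = 0 := by
  have hterms : 0 ≤ ∑ j ∈ univ.erase i, ‖A i j‖ * (‖v i‖ - ‖v j‖) :=
    sum_nonneg fun l _ => mul_nonneg (norm_nonneg _) (sub_nonneg.mpr (hmax l))
  have hgap : (‖A i i‖ - ∑ j ∈ univ.erase i, ‖A i j‖) * ‖v i‖ ≤ 0 := by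
    linarith [sum_erase_mul_sub_add_dominance_gap_nonpos hv i]
  exact norm_le_zero_iff.mp (nonpos_of_mul_nonpos_right hgap (sub_pos.mpr hstrict))

theorem det_ne_zero_of_weakly_chained_diag_dominant
    (hdom : ∀ i, ∑ j ∈ univ.erase i, ‖A i j‖ ≤ ‖A i i‖)
    (hchain : ∀ i, ∃ j, ReflTransGen (fun a b => A a b ≠ 0) i j ∧
      ∑ l ∈ univ.erase j, ‖A j l‖ < ‖A j j‖) :
    A.det ≠ 0 := by
  intro hdet
  obtain ⟨v, hv0, hv⟩ := exists_mulVec_eq_zero_iff.mpr hdet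
  obtain ⟨l, -⟩ := Function.ne_iff.mp hv0
  have : Nonempty n := ⟨l⟩
  obtain ⟨i, hmax⟩ := Finite.exists_max fun j => ‖v j‖
  obtain ⟨j, hij, hstrict⟩ := hchain i
  have hreach : ∀ b, ReflTransGen (fun a b => A a b ≠ 0) i b → ‖v b‖ = ‖v i‖ := by
    intro b hb
    induction hb with
    | refl => rfl
    | tail _ hbc ih =>
      exact (norm_eq_of_mulVec_eq_zero_of_ne_zero hv (ih ▸ hmax) (hdom _) hbc).trans ih
  have hvi : ‖v i‖ = 0 := by
    rw [← hreach j hij, eq_zero_of_mulVec_eq_zero_of_sum_erase_lt hv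
      (fun l => (hreach j hij).symm ▸ hmax l) hstrict, norm_zero]
  exact hv0 (funext fun l => norm_le_zero_iff.mp (hvi ▸ hmax l))

end Matrix

open Matrix Finset in
theorem drift_diffusion_matrix_sum_dominant_and_invertible_general
    {N : ℕ} (M A1 A2 : Matrix (Fin N) (Fin N) ℝ)
    (hsum : M = A1 + A2)
    (hMZ : ∀ i j, i ≠ j → M i j ≤ 0)
    (hA1col : ∀ j, 0 ≤ ∑ i, A1 i j)
    (hA2symm : A2.IsSymm)
    (hA2row : ∀ i, 0 ≤ ∑ j, A2 i j)
    (hA2strict : ∃ i, 0 < ∑ j, A2 i j) :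
    ((∀ i, ∑ j ∈ Finset.univ.erase i, |Mᵀ i j| ≤ |Mᵀ i i|) ∧
      (∃ i, ∑ j ∈ Finset.univ.erase i, |Mᵀ i j| < |Mᵀ i i|)) ∧
    ((∀ p q : Fin N, p ≠ q → ∃ (k : ℕ) (c : Fin (k + 2) → Fin N),
        Function.Injective c ∧ c 0 = p ∧ c (Fin.last (k + 1)) = q ∧
        ∀ l : Fin (k + 1), M (c l.castSucc) (c l.succ) ≠ 0) →
      IsUnit M.det) := by
  have hZ : ∀ i j, i ≠ j → Mᵀ i j ≤ 0 := fun i j hij => hMZ j i hij.symm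
  have hrow (i) : ∑ j, Mᵀ i j = ∑ j, A1 j i + ∑ j, A2 i j := by
    rw [hsum, transpose_add, hA2symm.eq, ← sum_add_distrib]
    rfl
  have hrow_nonneg (i) : 0 ≤ ∑ j, Mᵀ i j := by linarith [hrow i, hA1col i, hA2row i]
  obtain ⟨i₁, hi₁⟩ := hA2strict
  have hdom (i) : ∑ j ∈ univ.erase i, |Mᵀ i j| ≤ |Mᵀ i i| := by
    linarith [sum_erase_abs_add_sum_eq_abs_diag hZ (hrow_nonneg i), hrow_nonneg i]
  have hstrict : ∑ j ∈ univ.erase i₁, |Mᵀ i₁ j| < |Mᵀ i₁ i₁| := by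
    linarith [sum_erase_abs_add_sum_eq_abs_diag hZ (hrow_nonneg i₁), hrow i₁, hA1col i₁]
  refine ⟨⟨hdom, i₁, hstrict⟩, fun hSC => ?_⟩
  rw [isUnit_iff_ne_zero, ← det_transpose]
  refine det_ne_zero_of_weakly_chained_diag_dominant hdom fun i => ⟨i₁, ?_, hstrict⟩
  rcases eq_or_ne i₁ i with rfl | hne
  · exact .refl
  obtain ⟨k, c, -, hc0, hcl, hc⟩ := hSC i₁ i hne
  exact hc0 ▸ hcl ▸ (Fin.reflTransGen_of_chain (r := fun a b => M a b ≠ 0) hc).swap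

open Matrix Finset in
theorem drift_diffusion_matrix_sum_dominant_and_invertible
    {N : ℕ} (M A1 A2 : Matrix (Fin N) (Fin N) ℝ)
    (hsum : M = A1 + A2)
    (hMZ : ∀ i j, i ≠ j → M i j ≤ 0)
    (hA1Z : ∀ i j, i ≠ j → A1 i j ≤ 0)
    (hA1col : ∀ j, 0 ≤ ∑ i, A1 i j)
    (hA1diag : ∀ i, 0 < A1 i i)
    (hA2Z : ∀ i j, i ≠ j → A2 i j ≤ 0)
    (hA2symm : A2.IsSymm)
    (hA2row : ∀ i, 0 ≤ ∑ j, A2 i j)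
    (hA2strict : ∃ i, 0 < ∑ j, A2 i j) :
    ((∀ i, ∑ j ∈ Finset.univ.erase i, |Mᵀ i j| ≤ |Mᵀ i i|) ∧
      (∃ i, ∑ j ∈ Finset.univ.erase i, |Mᵀ i j| < |Mᵀ i i|)) ∧
    ((∀ p q : Fin N, p ≠ q → ∃ (k : ℕ) (c : Fin (k + 2) → Fin N),
        Function.Injective c ∧ c 0 = p ∧ c (Fin.last (k + 1)) = q ∧
        ∀ l : Fin (k + 1), M (c l.castSucc) (c l.succ) ≠ 0) →
      IsUnit M.det) :=
  drift_diffusion_matrix_sum_dominant_and_invertible_general M A1 A2 hsum hMZ hA1col hA2symm hA2row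
    hA2strict
end

section
/- If A ∈ ℝ^{N×N} is irreducibly diagonally dominant (weakly diagonally dominant in every row, strictly in at least one row, and irreducible) and is a Z-matrix with positive diagonal entries, then A is a nonsingular M-matrix; in particular A⁻¹ exists and A⁻¹ ≥ 0 entrywise. -/
/-!
An irreducibly diagonally dominant Z-matrix `A` is monotone: if `A *ᵥ z ≥ 0` and `z` had a
negative minimum, then in each row where the minimum is attained, weak dominance forces equality
and `z` is constant along the nonzero entries of the row. Irreducibility spreads the minimum to
the strictly dominant row, a contradiction. Monotonicity yields `det A ≠ 0` and `A⁻¹ ≥ 0` (the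
columns of `A⁻¹` solve `A x = eⱼ ≥ 0`). For the splitting `A = s • 1 - B` with `s` above every
diagonal entry, the Gershgorin discs of `B` lie in the closed disc of radius `s` and touch its
boundary only at `s`, which is not an eigenvalue of `B` because `A` is nonsingular.
-/

open Matrix Finset

theorem Complex.norm_lt_of_mem_closedBall_of_ne {c r : ℝ} (hc : 0 < c) {μ : ℂ}
    (hμ : μ ∈ Metric.closedBall (c : ℂ) r) (hne : μ ≠ ↑(c + r)) : ‖μ‖ < c + r := by
  rw [Metric.mem_closedBall, dist_eq_norm] at hμ
  have hr : 0 ≤ r := (norm_nonneg _).trans hμ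
  have hball : (μ.re - c) ^ 2 + μ.im ^ 2 ≤ r ^ 2 := by
    have := pow_le_pow_left₀ (norm_nonneg _) hμ 2
    rw [Complex.sq_norm, Complex.normSq_apply] at this
    simpa [sq] using this
  by_contra! hle
  have hsq : (c + r) ^ 2 ≤ μ.re ^ 2 + μ.im ^ 2 := by
    have := pow_le_pow_left₀ (by positivity) hle 2
    rwa [Complex.sq_norm, Complex.normSq_apply, ← sq, ← sq] at this
  have hre : μ.re = c + r := by nlinarith
  have him : μ.im = 0 := by nlinarith
  exact hne (Complex.ext (by simpa using hre) (by simpa using him))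

namespace Matrix

variable {n : Type*}

theorem last_mem_of_nonzero_path {α : Type*} [Zero α] {A : Matrix n n α} {S : Set n}
    (hS : ∀ p ∈ S, ∀ j, A p j ≠ 0 → j ∈ S) {m : ℕ} {k : Fin (m + 2) → n} (hk0 : k 0 ∈ S)
    (hpath : ∀ l : Fin (m + 1), A (k l.castSucc) (k l.succ) ≠ 0) :
    k (Fin.last (m + 1)) ∈ S := by
  induction Fin.last (m + 1) using Fin.induction with
  | zero => exact hk0
  | succ l ih => exact hS _ ih _ (hpath l)

variable [Fintype n]

theorem mulVec_apply_eq_sum_row_mul_add {R : Type*} [CommRing R] (A : Matrix n n R)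
    (z : n → R) (p : n) :
    (A *ᵥ z) p = (∑ j, A p j) * z p + ∑ j, A p j * (z j - z p) := by
  simp only [mulVec, dotProduct, sum_mul, ← sum_add_distrib]
  exact sum_congr rfl fun j _ => by ring

variable [DecidableEq n]

section OrderedField

variable {R : Type*} [Field R] [LinearOrder R] [IsStrictOrderedRing R] {A : Matrix n n R}

theorem sum_row_eq_diag_sub_sum_abs {p : n} (hZ : ∀ j, p ≠ j → A p j ≤ 0) :
    ∑ j, A p j = A p p - ∑ j ∈ univ.erase p, |A p j| := by
  rw [← add_sum_erase _ _ (mem_univ p), sub_eq_add_neg, ← sum_neg_distrib]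
  refine congrArg _ (sum_congr rfl fun j hj => ?_)
  rw [abs_of_nonpos (hZ j (ne_of_mem_erase hj).symm), neg_neg]

theorem diag_le_and_eq_of_isMin_of_mulVec_nonneg {p : n} (hZ : ∀ j, p ≠ j → A p j ≤ 0)
    (hdom : ∑ j ∈ univ.erase p, |A p j| ≤ A p p) {z : n → R} (hmin : ∀ j, z p ≤ z j)
    (hneg : z p < 0) (hAz : 0 ≤ (A *ᵥ z) p) :
    A p p ≤ ∑ j ∈ univ.erase p, |A p j| ∧ ∀ j, A p j ≠ 0 → z j = z p := by
  have hrow : 0 ≤ ∑ j, A p j := by rw [sum_row_eq_diag_sub_sum_abs hZ]; linarith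
  have hterm : ∀ j ∈ univ, A p j * (z j - z p) ≤ 0 := fun j _ => by
    rcases eq_or_ne p j with rfl | hpj
    · simp
    · exact mul_nonpos_of_nonpos_of_nonneg (hZ j hpj) (sub_nonneg.2 (hmin j))
  have hdiag : (∑ j, A p j) * z p ≤ 0 := mul_nonpos_of_nonneg_of_nonpos hrow hneg.le
  have hsum := sum_nonpos hterm
  rw [mulVec_apply_eq_sum_row_mul_add] at hAz
  constructor
  · have : ∑ j, A p j = 0 := (mul_eq_zero.1 (by linarith)).resolve_right hneg.ne
    rw [sum_row_eq_diag_sub_sum_abs hZ] at this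
    linarith
  · intro j hj
    have := (sum_eq_zero_iff_of_nonpos hterm).1 (by linarith) j (mem_univ j)
    exact sub_eq_zero.1 ((mul_eq_zero.1 this).resolve_left hj)

theorem nonneg_of_mulVec_nonneg (hZ : ∀ i j, i ≠ j → A i j ≤ 0)
    (hdom : ∀ i, ∑ j ∈ univ.erase i, |A i j| ≤ A i i)
    (hstrict : ∃ i, ∑ j ∈ univ.erase i, |A i j| < A i i)
    (hirr : ∀ p q : n, p ≠ q → ∃ (m : ℕ) (k : Fin (m + 2) → n),
      k 0 = p ∧ k (Fin.last (m + 1)) = q ∧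
      ∀ l : Fin (m + 1), A (k l.castSucc) (k l.succ) ≠ 0)
    {z : n → R} (hAz : 0 ≤ A *ᵥ z) : 0 ≤ z := by
  obtain ⟨q, hq⟩ := hstrict
  have : Nonempty n := ⟨q⟩
  obtain ⟨p, hp⟩ := Finite.exists_min z
  suffices 0 ≤ z p from fun i => this.trans (hp i)
  by_contra! hpneg
  have key : ∀ i, z i = z p →
      A i i ≤ ∑ j ∈ univ.erase i, |A i j| ∧ ∀ j, A i j ≠ 0 → z j = z i := fun i hi =>
    diag_le_and_eq_of_isMin_of_mulVec_nonneg (hZ i) (hdom i) (hi ▸ hp) (hi ▸ hpneg) (hAz i)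
  have hqmin : z q = z p := by
    rcases eq_or_ne p q with rfl | hpq
    · rfl
    obtain ⟨m, k, hk0, hkq, hpath⟩ := hirr p q hpq
    exact hkq ▸ last_mem_of_nonzero_path (S := {i | z i = z p})
      (fun i hi j hj => ((key i hi).2 j hj).trans hi) (by simp [hk0]) hpath
  exact (key q hqmin).1.not_gt hq

theorem det_ne_zero_of_forall_mulVec_nonneg (hmono : ∀ z, 0 ≤ A *ᵥ z → 0 ≤ z) :
    A.det ≠ 0 := by
  intro hdet
  obtain ⟨v, hv, hAv⟩ := exists_mulVec_eq_zero_iff.2 hdet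
  have hpos : 0 ≤ v := hmono v hAv.ge
  have hneg : 0 ≤ -v := hmono (-v) (by rw [mulVec_neg, hAv, neg_zero])
  exact hv (le_antisymm (neg_nonneg.1 hneg) hpos)

theorem inv_nonneg_of_forall_mulVec_nonneg (hmono : ∀ z, 0 ≤ A *ᵥ z → 0 ≤ z) (i j : n) :
    0 ≤ A⁻¹ i j := by
  have hunit : IsUnit A.det := (det_ne_zero_of_forall_mulVec_nonneg hmono).isUnit
  have hcol : A *ᵥ (A⁻¹ *ᵥ Pi.single j 1) = Pi.single j 1 := by
    rw [mulVec_mulVec, mul_nonsing_inv A hunit, one_mulVec]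
  have := hmono _ (hcol ▸ Pi.single_nonneg.2 zero_le_one) i
  rwa [mulVec_single_one] at this

end OrderedField

theorem norm_lt_of_mem_spectrum_smul_one_sub {A : Matrix n n ℝ}
    (hdom : ∀ i, ∑ j ∈ univ.erase i, |A i j| ≤ A i i) (hdet : A.det ≠ 0) {s : ℝ}
    (hs : ∀ i, A i i < s) {μ : ℂ} (hμ : μ ∈ spectrum ℂ ((s • 1 - A).map (fun x => (x : ℂ)))) :
    ‖μ‖ < s := by
  set B := (s • 1 - A).map (fun x => (x : ℂ))
  have hne : μ ≠ s := by
    rintro rfl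
    refine spectrum.mem_iff.1 hμ ((isUnit_iff_isUnit_det _).2 ?_)
    have : algebraMap ℂ (Matrix n n ℂ) s - B = Complex.ofRealHom.mapMatrix A := by
      ext i j
      rcases eq_or_ne i j with rfl | hij <;> simp [B, algebraMap_eq_diagonal, *]
    rw [this, ← RingHom.map_det]
    exact (Complex.ofReal_ne_zero.2 hdet).isUnit
  obtain ⟨k, hk⟩ := eigenvalue_mem_ball (Module.End.hasEigenvalue_iff_mem_spectrum.2
    ((spectrum_toLin' B).symm ▸ hμ))
  have hdisc : μ ∈ Metric.closedBall ((s - A k k : ℝ) : ℂ) (A k k) := by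
    have hrad : ∑ j ∈ univ.erase k, ‖B k j‖ = ∑ j ∈ univ.erase k, |A k j| :=
      sum_congr rfl fun j hj => by simp [B, (ne_of_mem_erase hj).symm]
    have hcenter : B k k = ((s - A k k : ℝ) : ℂ) := by simp [B]
    rw [hrad, hcenter] at hk
    exact Metric.closedBall_subset_closedBall (hdom k) hk
  simpa using
    Complex.norm_lt_of_mem_closedBall_of_ne (sub_pos.2 (hs k)) hdisc (by simpa using hne)

end Matrix

open Matrix Finset in
theorem irreducibly_diagonally_dominant_Zmatrix_is_nonsingular_Mmatrix_general
    {N : ℕ} (A : Matrix (Fin N) (Fin N) ℝ)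
    (hZ : ∀ i j, i ≠ j → A i j ≤ 0)
    (hdom : ∀ i, ∑ j ∈ Finset.univ.erase i, |A i j| ≤ A i i)
    (hstrict : ∃ i, ∑ j ∈ Finset.univ.erase i, |A i j| < A i i)
    (hirr : ∀ p q : Fin N, p ≠ q → ∃ (m : ℕ) (k : Fin (m + 2) → Fin N),
      Function.Injective k ∧ k 0 = p ∧ k (Fin.last (m + 1)) = q ∧
      ∀ l : Fin (m + 1), A (k l.castSucc) (k l.succ) ≠ 0) :
    (∃ (s : ℝ) (B : Matrix (Fin N) (Fin N) ℝ),
        (∀ i j, 0 ≤ B i j) ∧ A = s • (1 : Matrix (Fin N) (Fin N) ℝ) - B ∧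
        ∀ μ ∈ spectrum ℂ (B.map (fun x => (x : ℂ))), ‖μ‖ < s) ∧
      IsUnit A.det ∧ ∀ i j, 0 ≤ A⁻¹ i j := by
  have hmono : ∀ z, 0 ≤ A *ᵥ z → 0 ≤ z := fun _ => nonneg_of_mulVec_nonneg hZ hdom hstrict
    fun p q hpq => (hirr p q hpq).imp fun _ ⟨k, _, hk⟩ => ⟨k, hk⟩
  have hdet : A.det ≠ 0 := det_ne_zero_of_forall_mulVec_nonneg hmono
  obtain ⟨s, hs⟩ : ∃ s, ∀ i, A i i < s := by
    obtain ⟨M, hM⟩ := Finite.exists_le fun i => A i i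
    exact ⟨M + 1, fun i => (hM i).trans_lt (lt_add_one M)⟩
  have hB : ∀ i j, 0 ≤ (s • 1 - A) i j := fun i j => by
    rcases eq_or_ne i j with rfl | hij
    · simpa using (hs i).le
    · simpa [hij] using hZ i j hij
  exact ⟨⟨s, s • 1 - A, hB, (sub_sub_cancel _ _).symm,
      fun μ hμ => norm_lt_of_mem_spectrum_smul_one_sub hdom hdet hs hμ⟩,
    hdet.isUnit, inv_nonneg_of_forall_mulVec_nonneg hmono⟩

open Matrix Finset in
theorem irreducibly_diagonally_dominant_Zmatrix_is_nonsingular_Mmatrix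
    {N : ℕ} (A : Matrix (Fin N) (Fin N) ℝ)
    (hZ : ∀ i j, i ≠ j → A i j ≤ 0)
    (hdiag : ∀ i, 0 < A i i)
    (hdom : ∀ i, ∑ j ∈ Finset.univ.erase i, |A i j| ≤ A i i)
    (hstrict : ∃ i, ∑ j ∈ Finset.univ.erase i, |A i j| < A i i)
    (hirr : ∀ p q : Fin N, p ≠ q → ∃ (m : ℕ) (k : Fin (m + 2) → Fin N),
      Function.Injective k ∧ k 0 = p ∧ k (Fin.last (m + 1)) = q ∧
      ∀ l : Fin (m + 1), A (k l.castSucc) (k l.succ) ≠ 0) :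
    (∃ (s : ℝ) (B : Matrix (Fin N) (Fin N) ℝ),
        (∀ i j, 0 ≤ B i j) ∧ A = s • (1 : Matrix (Fin N) (Fin N) ℝ) - B ∧
        ∀ μ ∈ spectrum ℂ (B.map (fun x => (x : ℂ))), ‖μ‖ < s) ∧
      IsUnit A.det ∧ ∀ i j, 0 ≤ A⁻¹ i j :=
  irreducibly_diagonally_dominant_Zmatrix_is_nonsingular_Mmatrix_general A hZ hdom hstrict hirr
end
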